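/- Every admissible abstract simplex path P with max_j h_j(P) = 1 of dimension n ≥ 3 is reducible: there exists a finite sequence of exhaustive vertex and edge expansions transforming P into a 0-path (a path with I = 0 and V identically 0). -/
import Mathlib


/-- Data of an abstract simplex path of dimension `n`: the vertices (colors) of the
`n`-simplex are indexed by `Fin (n+1)`; `C` and `V` are indexed by positive naturals
(positions `1,…,k-1` are the relevant ones for a path of length `k`). -/
structure SPath (n : ℕ) where
  I : Fin (n + 1) → Bool
  C : ℕ → Fin (n + 1)
  V : ℕ → Bool

namespace SPath

variable {n : ℕ}

/-- The `j`-th simplex `R^j(P)` of the path, defined via the last-occurrence rule. -/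
def R (P : SPath n) (j : ℕ) (i : Fin (n + 1)) : Bool :=
  if h : ((Finset.Icc 1 (j - 1)).filter fun m => P.C m = i).Nonempty then
    P.V (((Finset.Icc 1 (j - 1)).filter fun m => P.C m = i).max' h)
  else P.I i

/-- The height `h_j(P)` of the `j`-th simplex: the number of `1`-entries. -/
def height (P : SPath n) (j : ℕ) : ℕ :=
  (Finset.univ.filter fun i : Fin (n + 1) => P.R j i = true).card

/-- The no-back-flip condition for a path of length `k`. -/
def NoBackFlip (P : SPath n) (k : ℕ) : Prop :=
  ∀ i, 1 ≤ i → i + 1 ≤ k - 1 → P.C i ≠ P.C (i + 1)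

/-- A boolean `[n]`-tuple is monochromatic. -/
def Mono (f : Fin (n + 1) → Bool) : Prop := ∃ b, ∀ i, f i = b

/-- `P` is an atomic path of length `k`. -/
def Atomic (P : SPath n) (k : ℕ) : Prop :=
  NoBackFlip P k ∧ Even k ∧ 2 ≤ k ∧
    (∀ i, P.R 1 i = false) ∧ (∀ i, P.R k i = false) ∧
    ∀ j, 1 < j → j < k → ¬Mono (P.R j)

/-- The subpath of `P` starting at position `a` (the subpath `P[a,b]` has length `b+1-a`). -/
def sub (P : SPath n) (a : ℕ) : SPath n :=
  ⟨fun i => P.R a i, fun m => P.C (a - 1 + m), fun m => P.V (a - 1 + m)⟩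

/-- `P` (of length `k`) is admissible: a concatenation of atomic paths. -/
def Admissible (P : SPath n) (k : ℕ) : Prop :=
  ∃ (r : ℕ) (a : ℕ → ℕ), 1 ≤ r ∧ a 0 = 0 ∧ a r = k ∧
    (∀ s, s < r → a s < a (s + 1)) ∧
    ∀ s, s < r → Atomic (P.sub (a s + 1)) (a (s + 1) - a s)

/-- A `0`-path of length `k`: zero initial simplex and all `V`-values `0`. -/
def IsZeroPath (P : SPath n) (k : ℕ) : Prop :=
  (∀ i, P.I i = false) ∧ ∀ j, 1 ≤ j → j + 1 ≤ k → P.V j = false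

end SPath

/-- Number of occurrences of `l` among `(Q a, …, Q b)`. -/
def cnt {n : ℕ} (Q : ℕ → Fin (n + 1)) (a b : ℕ) (l : Fin (n + 1)) : ℕ :=
  ((Finset.Icc a b).filter fun m => Q m = l).card

/-- The tuple `(Q 1, …, Q t)` describes an `[n]`-cube loop. -/
def IsCubeLoop {n : ℕ} (Q : ℕ → Fin (n + 1)) (t : ℕ) : Prop :=
  1 ≤ t ∧ (∀ l, Even (cnt Q 1 t l)) ∧
    ∀ i j, 1 ≤ i → i < j → j ≤ t → (i, j) ≠ (1, t) → ∃ l, ¬Even (cnt Q i j l)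

/-- The tuple `(Q 1, …, Q t)` together with the split `s` describes an `[n]`-cube `p`-path. -/
def IsCubePath {n : ℕ} (p : Fin (n + 1)) (Q : ℕ → Fin (n + 1)) (t s : ℕ) : Prop :=
  1 ≤ s ∧ s < t ∧ (∀ m, 1 ≤ m → m ≤ t → Q m ≠ p) ∧
    (∀ l, l ≠ p → Even (cnt Q 1 t l)) ∧
    (∀ i j, 1 ≤ i → i < j → j ≤ s → ∃ l, ¬Even (cnt Q i j l)) ∧
    ∀ i j, s + 1 ≤ i → i < j → j ≤ t → ∃ l, ¬Even (cnt Q i j l)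

namespace SPath

variable {n : ℕ}

/-- The labels `w_i` used in the vertex and edge expansions. -/
def w (P : SPath n) (m : ℕ) (D : Fin (n + 1) → Bool) (Q : ℕ → Fin (n + 1)) (i : ℕ) : Bool :=
  if Even (cnt Q 1 i (Q i)) then P.R m (Q i) else D (Q i)

/-- The vertex expansion `P(m, D, Q)` for a cube loop `Q` of length `t`. -/
def vexp (P : SPath n) (m : ℕ) (D : Fin (n + 1) → Bool) (Q : ℕ → Fin (n + 1)) (t : ℕ) :
    SPath n where
  I := P.I
  C := fun j =>
    if j ≤ m - 1 then P.C j
    else if j ≤ m + t - 3 then Q (j + 2 - m)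
    else P.C (j + 2 - t)
  V := fun j =>
    if j ≤ m - 2 then P.V j
    else if j ≤ m + t - 3 then P.w m D Q (j + 2 - m)
    else P.V (j + 2 - t)

/-- The edge expansion `P(m, D, Q, s)` for a cube path `Q` of length `t` with split `s`. -/
def eexp (P : SPath n) (m : ℕ) (D : Fin (n + 1) → Bool) (Q : ℕ → Fin (n + 1)) (t s : ℕ) :
    SPath n where
  I := P.I
  C := fun j =>
    if j ≤ m - 1 then P.C j
    else if j ≤ m + s - 2 then Q (j + 2 - m)
    else if j = m + s - 1 then P.C m
    else if j ≤ m + t - 2 then Q (j + 1 - m)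
    else P.C (j + 2 - t)
  V := fun j =>
    if j ≤ m - 2 then P.V j
    else if j ≤ m + s - 2 then P.w m D Q (j + 2 - m)
    else if j = m + s - 1 then P.V m
    else if j ≤ m + t - 2 then P.w m D Q (j + 1 - m)
    else P.V (j + 2 - t)

/-- Two cube vertices differ in exactly one coordinate. -/
def Adjacent (α β : Fin (n + 1) → Bool) : Prop := ∃! l, α l ≠ β l

/-- Membership in `M(A)` for the `2 × (n+1)` array with rows `A0` and `A1`. -/
def MemMA (A0 A1 : Fin (n + 1) → Bool) (α : Fin (n + 1) → Bool) : Prop :=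
  ∃ b, ∀ l, (if α l then A1 l else A0 l) = b

/-- The vertex expansion with data `(m, D, Q)` (loop length `t`) is exhaustive. -/
def ExhVertex (P : SPath n) (m t : ℕ) (D : Fin (n + 1) → Bool) (Q : ℕ → Fin (n + 1)) : Prop :=
  ∃ f : (Fin (n + 1) → Bool) → Fin (n + 1) → Bool,
    ∀ α, MemMA (P.R m) D α →
      (f α ≠ α → MemMA (P.R m) D (f α) ∧ f (f α) = α ∧ Adjacent α (f α)) ∧
      (f α = α → ∃ i, 1 ≤ i ∧ i ≤ t - 1 ∧
        ∀ j, α j = true ↔ ¬Even (cnt Q 1 i j))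

/-- The edge expansion with data `(m, D, Q, s)` (length `t`) is exhaustive. -/
def ExhEdge (P : SPath n) (m t s : ℕ) (D : Fin (n + 1) → Bool) (Q : ℕ → Fin (n + 1)) : Prop :=
  ∃ f : (Fin (n + 1) → Bool) → Fin (n + 1) → Bool,
    ∀ α, MemMA (P.R m) (fun l => if l = P.C m then P.V m else D l) α →
      (f α ≠ α →
        MemMA (P.R m) (fun l => if l = P.C m then P.V m else D l) (f α) ∧
          f (f α) = α ∧ Adjacent α (f α)) ∧
      (f α = α → ∃ i,
        ((α (P.C m) = false ∧ 1 ≤ i ∧ i ≤ s) ∨ (α (P.C m) = true ∧ s + 1 ≤ i ∧ i ≤ t)) ∧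
        ∀ j, j ≠ P.C m → (α j = true ↔ ¬Even (cnt Q 1 i j)))

/-- `(P', k')` is obtained from `(P, k)` by a finite sequence of exhaustive
vertex and edge expansions. -/
inductive Reduces : SPath n → ℕ → SPath n → ℕ → Prop where
  | refl (P : SPath n) (k : ℕ) : Reduces P k P k
  | vstep (P : SPath n) (k m t : ℕ) (D : Fin (n + 1) → Bool) (Q : ℕ → Fin (n + 1))
      (P' : SPath n) (k' : ℕ) :
      2 ≤ m → m + 1 ≤ k → IsCubeLoop Q t → Q 1 = P.C (m - 1) → Q t = P.C m →
      ExhVertex P m t D Q →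
      Reduces (P.vexp m D Q t) (k + t - 2) P' k' → Reduces P k P' k'
  | estep (P : SPath n) (k m t s : ℕ) (D : Fin (n + 1) → Bool) (Q : ℕ → Fin (n + 1))
      (P' : SPath n) (k' : ℕ) :
      2 ≤ m → m + 2 ≤ k → IsCubePath (P.C m) Q t s → Q 1 = P.C (m - 1) → Q t = P.C (m + 1) →
      ExhEdge P m t s D Q →
      Reduces (P.eexp m D Q t s) (k + t - 2) P' k' → Reduces P k P' k'

/-- `P` is reducible: some finite sequence of exhaustive vertex and edge
expansions transforms it into a `0`-path. -/
def Reducible (P : SPath n) (k : ℕ) : Prop :=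
  ∃ P' k', Reduces P k P' k' ∧ IsZeroPath P' k'

end SPath


section AuxLemmas

namespace SPath

variable {n : ℕ}

lemma R_one (P : SPath n) (i : Fin (n + 1)) : P.R 1 i = P.I i := by
  have h0 : Finset.Icc 1 (1 - 1) = (∅ : Finset ℕ) := by simp
  rw [R, h0]
  simp

lemma R_succ (P : SPath n) (j : ℕ) (hj : 1 ≤ j) (i : Fin (n + 1)) :
    P.R (j + 1) i = if P.C j = i then P.V j else P.R j i := by
  have hIcc : Finset.Icc 1 (j + 1 - 1) = insert j (Finset.Icc 1 (j - 1)) := by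
    ext x; simp only [Finset.mem_Icc, Finset.mem_insert]; omega
  by_cases h : P.C j = i
  · rw [if_pos h, R]
    have hne : ((Finset.Icc 1 (j + 1 - 1)).filter fun m => P.C m = i).Nonempty :=
      ⟨j, by rw [Finset.mem_filter, hIcc]; exact ⟨Finset.mem_insert_self _ _, h⟩⟩
    rw [dif_pos hne]
    congr 1
    apply le_antisymm
    · apply Finset.max'_le
      intro y hy
      rw [Finset.mem_filter, hIcc, Finset.mem_insert] at hy
      rcases hy.1 with h' | h'
      · omega
      · rw [Finset.mem_Icc] at h'; omega
    · exact Finset.le_max' _ _ (by rw [Finset.mem_filter, hIcc]; exact ⟨Finset.mem_insert_self _ _, h⟩)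
  · rw [if_neg h]
    have hset : ((Finset.Icc 1 (j + 1 - 1)).filter fun m => P.C m = i)
        = ((Finset.Icc 1 (j - 1)).filter fun m => P.C m = i) := by
      rw [hIcc, Finset.filter_insert, if_neg h]
    unfold R
    rw [hset]

lemma V_eq (P : SPath n) (j : ℕ) (hj : 1 ≤ j) : P.R (j + 1) (P.C j) = P.V j := by
  rw [R_succ P j hj]; simp

lemma R_congr (P P₂ : SPath n) (hI : ∀ i, P.I i = P₂.I i) :
    ∀ j, (∀ m, 1 ≤ m → m < j → P.C m = P₂.C m ∧ P.V m = P₂.V m) →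
      ∀ i, P.R j i = P₂.R j i := by
  intro j
  induction j with
  | zero =>
    intro _ i
    have h0 : Finset.Icc 1 (0 - 1) = (∅ : Finset ℕ) := by simp
    rw [R, R, h0]
    simp [hI i]
  | succ j ih =>
    intro hCV i
    rcases Nat.eq_zero_or_pos j with rfl | hj
    · rw [show (0 + 1 : ℕ) = 1 from rfl, R_one, R_one, hI]
    · rw [R_succ P j hj, R_succ P₂ j hj]
      obtain ⟨hc, hv⟩ := hCV j hj (by omega)
      rw [hc, hv, ih (fun m hm hmj => hCV m hm (by omega)) i]

lemma R_stable (P : SPath n) (i : Fin (n + 1)) (a : ℕ) (ha : 1 ≤ a) :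
    ∀ b, a ≤ b → (∀ j, a ≤ j → j < b → P.C j ≠ i) → P.R b i = P.R a i := by
  intro b hb
  induction b, hb using Nat.le_induction with
  | base => intro _; rfl
  | succ b hb ih =>
    intro h
    rw [R_succ P b (le_trans ha hb), if_neg (h b hb (by omega))]
    exact ih (fun j hj hjb => h j hj (by omega))

lemma R_sub (P : SPath n) (a : ℕ) :
    ∀ j, 1 ≤ j → ∀ i, (P.sub (a + 1)).R j i = P.R (a + j) i := by
  intro j hj
  induction j, hj using Nat.le_induction with
  | base =>
    intro i
    rw [R_one]
    rfl
  | succ j hj ih =>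
    intro i
    rw [R_succ _ j hj]
    have hc : (P.sub (a + 1)).C j = P.C (a + j) := rfl
    have hv : (P.sub (a + 1)).V j = P.V (a + j) := rfl
    rw [hc, hv, show a + (j + 1) = (a + j) + 1 from by omega,
      R_succ P (a + j) (by omega)]
    rw [ih i]

lemma exhEdge_zero (P : SPath n) (m t s : ℕ) (Q : ℕ → Fin (n + 1)) (e : Fin (n + 1))
    (he : e ≠ P.C m) (hre : P.R m e = false) :
    P.ExhEdge m t s (fun _ => false) Q := by
  classical
  refine ⟨fun α => Function.update α e (!α e), ?_⟩
  intro α hα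
  obtain ⟨b, hb⟩ := hα
  have hA1e : (if e = P.C m then P.V m else false) = false := by rw [if_neg he]
  have hbe : b = false := by
    have h := hb e
    cases hae : α e <;> rw [hae] at h <;> simp only [if_true, if_false] at h
    · rw [← h, hre]; simp
    · rw [← h, hA1e]
  constructor
  · intro _
    refine ⟨⟨false, fun l => ?_⟩, ?_, ?_⟩
    · by_cases hl : l = e
      · subst hl
        simp only [Function.update_apply, if_pos rfl]
        cases hal : α l <;> simp [hA1e, hre]
      · simp only [Function.update_apply, if_neg hl]
        rw [hb l, hbe]
    · funext l
      by_cases hl : l = e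
      · subst hl; simp [Function.update_apply]
      · simp [Function.update_apply, hl]
    · refine ⟨e, ?_, ?_⟩
      · simp only [Function.update_apply, if_pos rfl]
        cases hae : α e <;> simp [hae]
      · intro l hl
        by_contra hle
        simp only [Function.update_apply, if_neg hle] at hl
        exact hl rfl
  · intro hfix
    exfalso
    have h := congrFun hfix e
    simp only [Function.update_apply, if_pos rfl] at h
    cases hae : α e <;> rw [hae] at h <;> simp at h

end SPath

lemma cnt_singleton {n : ℕ} (Q : ℕ → Fin (n + 1)) (i : ℕ) : cnt Q i i (Q i) = 1 := by
  unfold cnt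
  rw [Finset.Icc_self]
  rw [Finset.filter_singleton, if_pos rfl]
  rfl

lemma cnt_const {n : ℕ} (p l : Fin (n + 1)) (a b : ℕ) :
    cnt (fun _ => p) a b l = if p = l then b + 1 - a else 0 := by
  unfold cnt
  by_cases h : p = l
  · rw [if_pos h, Finset.filter_true_of_mem (fun x _ => h), Nat.card_Icc]
  · rw [if_neg h, Finset.filter_false_of_mem (fun x _ => h)]
    rfl

lemma isCubePath_const {n : ℕ} (p c : Fin (n + 1)) (h : p ≠ c) :
    IsCubePath c (fun _ => p) 2 1 := by
  refine ⟨le_refl 1, by omega, fun m _ _ => h, fun l hl => ?_, ?_, ?_⟩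
  · rw [cnt_const]
    split
    · norm_num
    · exact Even.zero
  · intro i j hi hij hj
    exact absurd hj (by omega)
  · intro i j hi hij hj
    exact absurd hj (by omega)

def Q4 {n : ℕ} (p b : Fin (n + 1)) : ℕ → Fin (n + 1) := fun i => if i % 2 = 1 then p else b

lemma Q4_one {n : ℕ} (p b : Fin (n + 1)) : Q4 p b 1 = p := rfl
lemma Q4_two {n : ℕ} (p b : Fin (n + 1)) : Q4 p b 2 = b := rfl
lemma Q4_three {n : ℕ} (p b : Fin (n + 1)) : Q4 p b 3 = p := rfl
lemma Q4_four {n : ℕ} (p b : Fin (n + 1)) : Q4 p b 4 = b := rfl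

lemma cnt_Q4_12 {n : ℕ} (p b : Fin (n + 1)) (l : Fin (n + 1)) :
    cnt (Q4 p b) 1 2 l = (if p = l then 1 else 0) + (if b = l then 1 else 0) := by
  have h : Finset.Icc 1 2 = ({1, 2} : Finset ℕ) := by decide
  unfold cnt
  rw [h]
  rw [show ({1, 2} : Finset ℕ) = insert 1 {2} from rfl]
  rw [Finset.filter_insert, Finset.filter_singleton, Q4_one, Q4_two]
  by_cases h1 : p = l <;> by_cases h2 : b = l <;>
    simp [h1, h2, Finset.card_insert_of_notMem]

lemma cnt_Q4_13 {n : ℕ} (p b : Fin (n + 1)) (l : Fin (n + 1)) :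
    cnt (Q4 p b) 1 3 l = (if p = l then 2 else 0) + (if b = l then 1 else 0) := by
  have h : Finset.Icc 1 3 = ({1, 2, 3} : Finset ℕ) := by decide
  unfold cnt
  rw [h]
  rw [show ({1, 2, 3} : Finset ℕ) = insert 1 (insert 2 {3}) from rfl]
  rw [Finset.filter_insert, Finset.filter_insert, Finset.filter_singleton, Q4_one, Q4_two, Q4_three]
  by_cases h1 : p = l <;> by_cases h2 : b = l <;>
    simp [h1, h2, Finset.card_insert_of_notMem]

lemma cnt_Q4_14 {n : ℕ} (p b : Fin (n + 1)) (l : Fin (n + 1)) :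
    cnt (Q4 p b) 1 4 l = (if p = l then 2 else 0) + (if b = l then 2 else 0) := by
  have h : Finset.Icc 1 4 = ({1, 2, 3, 4} : Finset ℕ) := by decide
  unfold cnt
  rw [h]
  rw [show ({1, 2, 3, 4} : Finset ℕ) = insert 1 (insert 2 (insert 3 {4})) from rfl]
  rw [Finset.filter_insert, Finset.filter_insert, Finset.filter_insert, Finset.filter_singleton,
    Q4_one, Q4_two, Q4_three, Q4_four]
  by_cases h1 : p = l <;> by_cases h2 : b = l <;>
    simp [h1, h2, Finset.card_insert_of_notMem]

lemma cnt_Q4_34 {n : ℕ} (p b : Fin (n + 1)) (l : Fin (n + 1)) :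
    cnt (Q4 p b) 3 4 l = (if p = l then 1 else 0) + (if b = l then 1 else 0) := by
  have h : Finset.Icc 3 4 = ({3, 4} : Finset ℕ) := by decide
  unfold cnt
  rw [h]
  rw [show ({3, 4} : Finset ℕ) = insert 3 {4} from rfl]
  rw [Finset.filter_insert, Finset.filter_singleton, Q4_three, Q4_four]
  by_cases h1 : p = l <;> by_cases h2 : b = l <;>
    simp [h1, h2, Finset.card_insert_of_notMem]

lemma isCubePath_Q4 {n : ℕ} (p b c : Fin (n + 1)) (hp : p ≠ c) (hb : b ≠ c) (hpb : p ≠ b) :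
    IsCubePath c (Q4 p b) 4 2 := by
  refine ⟨by omega, by omega, ?_, ?_, ?_, ?_⟩
  · intro m _ _
    unfold Q4
    split
    · exact hp
    · exact hb
  · intro l hl
    rw [cnt_Q4_14]
    by_cases h1 : p = l <;> by_cases h2 : b = l <;> simp [h1, h2] <;> decide
  · intro i j hi hij hj
    have hij' : i = 1 ∧ j = 2 := by omega
    obtain ⟨rfl, rfl⟩ := hij'
    refine ⟨p, ?_⟩
    rw [cnt_Q4_12, if_pos rfl, if_neg (Ne.symm hpb)]
    decide
  · intro i j hi hij hj
    have hij' : i = 3 ∧ j = 4 := by omega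
    obtain ⟨rfl, rfl⟩ := hij'
    refine ⟨p, ?_⟩
    rw [cnt_Q4_34, if_pos rfl, if_neg (Ne.symm hpb)]
    decide

end AuxLemmas
namespace SPath

variable {n : ℕ}

lemma eexp2_C (P : SPath n) (g : ℕ) (D : Fin (n + 1) → Bool) (p : Fin (n + 1)) (j : ℕ) :
    (P.eexp (g + 2) D (fun _ => p) 2 1).C j = P.C j := by
  simp only [eexp]
  split_ifs with h1 h2 h3 h4 <;> first | rfl | omega | (congr 1; omega)

lemma eexp2_V (P : SPath n) (g : ℕ) (p : Fin (n + 1)) (j : ℕ) :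
    (P.eexp (g + 2) (fun _ => false) (fun _ => p) 2 1).V j
      = if j = g + 1 then false else P.V j := by
  have hodd : ¬ Even (cnt (fun _ : ℕ => p) 1 1 ((fun _ : ℕ => p) 1)) := by
    rw [cnt_singleton]
    decide
  have hw : P.w (g + 2) (fun _ => false) (fun _ => p) 1 = false := by
    unfold w
    rw [if_neg hodd]
  simp only [eexp]
  by_cases h1 : j ≤ g
  · rw [if_pos (show j ≤ g + 2 - 2 from by omega), if_neg (show ¬ j = g + 1 from by omega)]
  · by_cases h2 : j = g + 1
    · rw [if_neg (show ¬ j ≤ g + 2 - 2 from by omega),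
        if_pos (show j ≤ g + 2 + 1 - 2 from by omega),
        show j + 2 - (g + 2) = 1 from by omega, hw, if_pos h2]
    · by_cases h3 : j = g + 2
      · rw [if_neg (show ¬ j ≤ g + 2 - 2 from by omega),
          if_neg (show ¬ j ≤ g + 2 + 1 - 2 from by omega),
          if_pos (show j = g + 2 + 1 - 1 from by omega), if_neg h2]
        congr 1
        omega
      · rw [if_neg (show ¬ j ≤ g + 2 - 2 from by omega),
          if_neg (show ¬ j ≤ g + 2 + 1 - 2 from by omega),
          if_neg (show ¬ j = g + 2 + 1 - 1 from by omega),
          if_neg (show ¬ j ≤ g + 2 + 2 - 2 from by omega), if_neg h2]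
        first | rfl | (congr 1; omega)

lemma eexp4_C (P : SPath n) (g : ℕ) (D : Fin (n + 1) → Bool) (p b : Fin (n + 1)) (j : ℕ) :
    (P.eexp (g + 2) D (Q4 p b) 4 2).C j =
      if j ≤ g + 1 then P.C j
      else if j = g + 2 then b
      else if j = g + 3 then P.C (g + 2)
      else if j = g + 4 then p
      else P.C (j - 2) := by
  simp only [eexp]
  by_cases h1 : j ≤ g + 1
  · rw [if_pos (show j ≤ g + 2 - 1 from by omega), if_pos h1]
  · by_cases h2 : j = g + 2
    · rw [if_neg (show ¬ j ≤ g + 2 - 1 from by omega), if_pos (show j ≤ g + 2 + 2 - 2 from by omega),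
        if_neg h1, if_pos h2, show j + 2 - (g + 2) = 2 from by omega, Q4_two]
    · by_cases h3 : j = g + 3
      · rw [if_neg (show ¬ j ≤ g + 2 - 1 from by omega),
          if_neg (show ¬ j ≤ g + 2 + 2 - 2 from by omega),
          if_pos (show j = g + 2 + 2 - 1 from by omega), if_neg h1, if_neg h2, if_pos h3]
      · by_cases h4 : j = g + 4
        · rw [if_neg (show ¬ j ≤ g + 2 - 1 from by omega),
            if_neg (show ¬ j ≤ g + 2 + 2 - 2 from by omega),
            if_neg (show ¬ j = g + 2 + 2 - 1 from by omega),
            if_pos (show j ≤ g + 2 + 4 - 2 from by omega), if_neg h1, if_neg h2, if_neg h3,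
            if_pos h4, show j + 1 - (g + 2) = 3 from by omega, Q4_three]
        · rw [if_neg (show ¬ j ≤ g + 2 - 1 from by omega),
            if_neg (show ¬ j ≤ g + 2 + 2 - 2 from by omega),
            if_neg (show ¬ j = g + 2 + 2 - 1 from by omega),
            if_neg (show ¬ j ≤ g + 2 + 4 - 2 from by omega), if_neg h1, if_neg h2, if_neg h3,
            if_neg h4]
          first | rfl | (congr 1; omega)

lemma eexp4_V (P : SPath n) (g : ℕ) (p b : Fin (n + 1)) (hpb : p ≠ b) (j : ℕ) :
    (P.eexp (g + 2) (fun _ => false) (Q4 p b) 4 2).V j =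
      if j ≤ g then P.V j
      else if j = g + 1 then false
      else if j = g + 2 then false
      else if j = g + 3 then P.V (g + 2)
      else if j = g + 4 then P.R (g + 2) p
      else P.V (j - 2) := by
  have hw1 : P.w (g + 2) (fun _ => false) (Q4 p b) 1 = false := by
    have h1 : ¬ Even (cnt (Q4 p b) 1 1 (Q4 p b 1)) := by rw [cnt_singleton]; decide
    unfold w
    rw [if_neg h1]
  have hw2 : P.w (g + 2) (fun _ => false) (Q4 p b) 2 = false := by
    have h1 : ¬ Even (cnt (Q4 p b) 1 2 (Q4 p b 2)) := by
      rw [Q4_two, cnt_Q4_12, if_neg hpb, if_pos rfl]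
      decide
    unfold w
    rw [if_neg h1]
  have hw3 : P.w (g + 2) (fun _ => false) (Q4 p b) 3 = P.R (g + 2) p := by
    have h1 : Even (cnt (Q4 p b) 1 3 (Q4 p b 3)) := by
      rw [Q4_three, cnt_Q4_13, if_pos rfl, if_neg (fun h => hpb h.symm)]
      decide
    unfold w
    rw [if_pos h1, Q4_three]
  simp only [eexp]
  by_cases h1 : j ≤ g
  · rw [if_pos (show j ≤ g + 2 - 2 from by omega), if_pos h1]
  · by_cases h2 : j = g + 1
    · rw [if_neg (show ¬ j ≤ g + 2 - 2 from by omega),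
        if_pos (show j ≤ g + 2 + 2 - 2 from by omega),
        show j + 2 - (g + 2) = 1 from by omega, hw1, if_neg h1, if_pos h2]
    · by_cases h3 : j = g + 2
      · rw [if_neg (show ¬ j ≤ g + 2 - 2 from by omega),
          if_pos (show j ≤ g + 2 + 2 - 2 from by omega),
          show j + 2 - (g + 2) = 2 from by omega, hw2, if_neg h1, if_neg h2, if_pos h3]
      · by_cases h4 : j = g + 3
        · rw [if_neg (show ¬ j ≤ g + 2 - 2 from by omega),
            if_neg (show ¬ j ≤ g + 2 + 2 - 2 from by omega),
            if_pos (show j = g + 2 + 2 - 1 from by omega), if_neg h1, if_neg h2, if_neg h3,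
            if_pos h4]
        · by_cases h5 : j = g + 4
          · rw [if_neg (show ¬ j ≤ g + 2 - 2 from by omega),
              if_neg (show ¬ j ≤ g + 2 + 2 - 2 from by omega),
              if_neg (show ¬ j = g + 2 + 2 - 1 from by omega),
              if_pos (show j ≤ g + 2 + 4 - 2 from by omega),
              show j + 1 - (g + 2) = 3 from by omega, hw3, if_neg h1, if_neg h2, if_neg h3,
              if_neg h4, if_pos h5]
          · rw [if_neg (show ¬ j ≤ g + 2 - 2 from by omega),
              if_neg (show ¬ j ≤ g + 2 + 2 - 2 from by omega),
              if_neg (show ¬ j = g + 2 + 2 - 1 from by omega),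
              if_neg (show ¬ j ≤ g + 2 + 4 - 2 from by omega), if_neg h1, if_neg h2, if_neg h3,
              if_neg h4, if_neg h5]
            first | rfl | (congr 1; omega)

end SPath
namespace SPath

variable {n : ℕ}

def trueSet (P : SPath n) (k : ℕ) : Finset ℕ :=
  (Finset.Icc 1 (k - 1)).filter fun u => P.V u = true

def GoodPath (P : SPath n) (k : ℕ) : Prop :=
  (∀ i, P.I i = false) ∧
  ∀ u, 1 ≤ u → u + 1 ≤ k → P.V u = true →
    ∃ v, u + 2 ≤ v ∧ v + 1 ≤ k ∧ P.C v = P.C u ∧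
      (∀ j, u < j → j < v → P.C j ≠ P.C u ∧ P.V j = false) ∧
      (∀ j, u ≤ j → j + 1 < v → P.C j ≠ P.C (j + 1)) ∧
      (∀ i, P.R (u + 1) i = decide (i = P.C u))

lemma reducible_of_empty (P : SPath n) (k : ℕ) (hI : ∀ i, P.I i = false)
    (hT : trueSet P k = ∅) : P.Reducible k := by
  refine ⟨P, k, Reduces.refl P k, hI, ?_⟩
  intro j hj hjk
  by_contra h
  have hjT : j ∈ trueSet P k := by
    simp only [trueSet, Finset.mem_filter, Finset.mem_Icc]
    refine ⟨⟨hj, by omega⟩, ?_⟩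
    cases hV : P.V j
    · exact absurd hV h
    · rfl
  rw [hT] at hjT
  exact absurd hjT (Finset.notMem_empty j)

lemma exists_third (hn : 3 ≤ n) (p c : Fin (n + 1)) : ∃ e : Fin (n + 1), e ≠ p ∧ e ≠ c := by
  by_contra h
  push_neg at h
  have hsub : (Finset.univ : Finset (Fin (n + 1))) ⊆ {p, c} := by
    intro x _
    rcases eq_or_ne x p with rfl | hxp
    · exact Finset.mem_insert_self _ _
    · have := h x hxp
      subst this
      exact Finset.mem_insert_of_mem (Finset.mem_singleton_self _)
  have h1 := Finset.card_le_card hsub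
  have h2 : ({p, c} : Finset (Fin (n + 1))).card ≤ 2 :=
    le_trans (Finset.card_insert_le _ _) (by simp)
  rw [Finset.card_univ, Fintype.card_fin] at h1
  omega

lemma indicator_of_card_le (f : Fin (n + 1) → Bool) (p : Fin (n + 1)) (hp : f p = true)
    (h : (Finset.univ.filter fun i => f i = true).card ≤ 1) :
    ∀ i, f i = decide (i = p) := by
  intro i
  rcases eq_or_ne i p with rfl | hip
  · simp [hp]
  · have hfi : f i = false := by
      by_contra hfi
      rw [Bool.not_eq_false] at hfi
      have hsub : ({i, p} : Finset (Fin (n + 1))) ⊆ Finset.univ.filter fun j => f j = true := by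
        intro x hx
        rcases Finset.mem_insert.mp hx with rfl | hx
        · simp [hfi]
        · rw [Finset.mem_singleton] at hx
          subst hx
          simp [hp]
      have hcard := Finset.card_le_card hsub
      rw [Finset.card_insert_of_notMem (by simp [hip]), Finset.card_singleton] at hcard
      omega
    rw [hfi]
    simp [hip]

lemma mem_trueSet {P : SPath n} {k u : ℕ} :
    u ∈ trueSet P k ↔ (1 ≤ u ∧ u ≤ k - 1) ∧ P.V u = true := by
  simp [trueSet, Finset.mem_Icc]

lemma sup_eq_max' (S : Finset ℕ) (hS : S.Nonempty) : S.sup id = S.max' hS :=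
  le_antisymm (Finset.sup_le fun w hw => S.le_max' w hw) (Finset.le_sup (f := id) (S.max'_mem hS))

lemma reducible_of_good (hn : 3 ≤ n) :
    ∀ a b (P : SPath n) (k : ℕ), GoodPath P k → (trueSet P k).card ≤ a →
      k ≤ (trueSet P k).sup id + b → P.Reducible k := by
  intro a
  induction a with
  | zero =>
    intro b P k hg hcard _
    exact reducible_of_empty P k hg.1 (Finset.card_eq_zero.mp (Nat.le_zero.mp hcard))
  | succ a iha =>
    intro b
    induction b with
    | zero =>
      intro P k hg hcard hsup
      rcases Finset.eq_empty_or_nonempty (trueSet P k) with hT | hT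
      · exact reducible_of_empty P k hg.1 hT
      · exfalso
        have hum := (trueSet P k).max'_mem hT
        rw [mem_trueSet] at hum
        rw [sup_eq_max' _ hT] at hsup
        obtain ⟨⟨h1, h2⟩, _⟩ := hum
        omega
    | succ b ihb =>
      intro P k hg hcard hsup
      rcases Finset.eq_empty_or_nonempty (trueSet P k) with hT | hT
      · exact reducible_of_empty P k hg.1 hT
      have hpos := Finset.card_pos.mpr hT
      obtain ⟨g, hgu⟩ : ∃ g, (trueSet P k).max' hT = g + 1 := by
        refine ⟨(trueSet P k).max' hT - 1, ?_⟩
        have hm := (trueSet P k).max'_mem hT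
        rw [mem_trueSet] at hm
        omega
      have hum : g + 1 ∈ trueSet P k := by
        have := (trueSet P k).max'_mem hT
        rwa [hgu] at this
      have hmax : ∀ w, w ∈ trueSet P k → w ≤ g + 1 := by
        intro w hw
        have := (trueSet P k).le_max' w hw
        omega
      have hsupu : (trueSet P k).sup id = g + 1 := by rw [sup_eq_max' _ hT, hgu]
      rw [hsupu] at hsup
      obtain ⟨⟨hu1, huk⟩, hVu⟩ := mem_trueSet.mp hum
      obtain ⟨v, hv2, hvk, hCv, hint, hcons, hRu⟩ := hg.2 (g + 1) (by omega) (by omega) hVu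
      have hcp : P.C (g + 2) ≠ P.C (g + 1) := (hint (g + 2) (by omega) (by omega)).1
      obtain ⟨e, hep, hec⟩ := exists_third hn (P.C (g + 1)) (P.C (g + 2))
      have hre : P.R (g + 2) e = false := by
        rw [show g + 2 = (g + 1) + 1 from rfl, hRu e]
        simp [hep]
      rcases eq_or_lt_of_le hv2 with hveq | hvgt
      · -- CASE A : v = g + 3, use a (t = 2, s = 1) edge expansion
        have hveq' : v = g + 3 := by omega
        have hC2 : ∀ j, (P.eexp (g + 2) (fun _ => false) (fun _ => P.C (g + 1)) 2 1).C j
            = P.C j := fun j => eexp2_C P g _ _ j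
        have hV2 : ∀ j, (P.eexp (g + 2) (fun _ => false) (fun _ => P.C (g + 1)) 2 1).V j
            = if j = g + 1 then false else P.V j := fun j => eexp2_V P g _ j
        set P₂ := P.eexp (g + 2) (fun _ => false) (fun _ => P.C (g + 1)) 2 1 with hP2def
        have hT2 : trueSet P₂ k = (trueSet P k).erase (g + 1) := by
          ext x
          simp only [trueSet, Finset.mem_filter, Finset.mem_Icc, Finset.mem_erase]
          rw [hV2 x]
          by_cases hx : x = g + 1
          · rw [if_pos hx]
            simp [hx]
          · rw [if_neg hx]
            tauto
        have hg2 : GoodPath P₂ k := by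
          refine ⟨fun i => hg.1 i, ?_⟩
          intro w hw1 hwk hVw
          rw [hV2 w] at hVw
          by_cases hwu : w = g + 1
          · rw [if_pos hwu] at hVw
            exact absurd hVw (by simp)
          · rw [if_neg hwu] at hVw
            have hwT : w ∈ trueSet P k := mem_trueSet.mpr ⟨⟨hw1, by omega⟩, hVw⟩
            have hwle : w ≤ g := by
              have := hmax w hwT
              omega
            obtain ⟨vw, hw2, hwk', hCw, hintw, hconsw, hRw⟩ := hg.2 w hw1 hwk hVw
            have hvwle : vw ≤ g + 1 := by
              by_contra hvw
              have h2 := (hintw (g + 1) (by omega) (by omega)).2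
              rw [hVu] at h2
              simp at h2
            refine ⟨vw, hw2, by omega, ?_, ?_, ?_, ?_⟩
            · rw [hC2, hC2, hCw]
            · intro j hj1 hj2
              rw [hC2, hC2, hV2]
              rw [if_neg (show ¬ j = g + 1 from by omega)]
              exact hintw j hj1 hj2
            · intro j hj1 hj2
              rw [hC2, hC2]
              exact hconsw j hj1 hj2
            · intro i
              rw [hC2, ← R_congr P P₂ (fun i => rfl) (w + 1)
                (fun m hm1 hm2 => ⟨(hC2 m).symm,
                  by rw [hV2 m, if_neg (show ¬ m = g + 1 from by omega)]⟩) i]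
              exact hRw i
        have hcard2 : (trueSet P₂ k).card ≤ a := by
          rw [hT2, Finset.card_erase_of_mem hum]
          omega
        have hred2 : P₂.Reducible k := iha k P₂ k hg2 hcard2 (Nat.le_add_left k _)
        obtain ⟨P', k', hst, hz⟩ := hred2
        refine ⟨P', k', ?_, hz⟩
        refine Reduces.estep P k (g + 2) 2 1 (fun _ => false) (fun _ => P.C (g + 1)) P' k'
          (by omega) (by omega) ?_ ?_ ?_ ?_ ?_
        · exact isCubePath_const (P.C (g + 1)) (P.C (g + 2)) (Ne.symm hcp)
        · rfl
        · show P.C (g + 1) = P.C (g + 2 + 1)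
          rw [show g + 2 + 1 = v from by omega, hCv]
        · exact exhEdge_zero P (g + 2) 2 1 _ e hec hre
        · exact hst
      · -- CASE B : v ≥ g + 4, use a (t = 4, s = 2) edge expansion
        have hb'p : P.C (g + 3) ≠ P.C (g + 1) := (hint (g + 3) (by omega) (by omega)).1
        have hcb' : P.C (g + 2) ≠ P.C (g + 3) := hcons (g + 2) (by omega) (by omega)
        have hVg2 : P.V (g + 2) = false := (hint (g + 2) (by omega) (by omega)).2
        have hRg2p : P.R (g + 2) (P.C (g + 1)) = true := by
          rw [show g + 2 = (g + 1) + 1 from rfl, hRu]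
          simp
        have hC2 : ∀ j, (P.eexp (g + 2) (fun _ => false) (Q4 (P.C (g + 1)) (P.C (g + 3))) 4 2).C j
            = if j ≤ g + 1 then P.C j
              else if j = g + 2 then P.C (g + 3)
              else if j = g + 3 then P.C (g + 2)
              else if j = g + 4 then P.C (g + 1)
              else P.C (j - 2) := fun j => eexp4_C P g _ _ _ j
        have hV2 : ∀ j, (P.eexp (g + 2) (fun _ => false) (Q4 (P.C (g + 1)) (P.C (g + 3))) 4 2).V j
            = if j ≤ g then P.V j
              else if j = g + 1 then false
              else if j = g + 2 then false
              else if j = g + 3 then P.V (g + 2)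
              else if j = g + 4 then P.R (g + 2) (P.C (g + 1))
              else P.V (j - 2) := fun j => eexp4_V P g _ _ (Ne.symm hb'p) j
        set P₂ := P.eexp (g + 2) (fun _ => false) (Q4 (P.C (g + 1)) (P.C (g + 3))) 4 2 with hP2def
        have hC2a : ∀ j, j ≤ g + 1 → P₂.C j = P.C j := by
          intro j hj
          rw [hC2 j, if_pos hj]
        have hC2b : P₂.C (g + 2) = P.C (g + 3) := by
          rw [hC2, if_neg (by omega), if_pos rfl]
        have hC2c : P₂.C (g + 3) = P.C (g + 2) := by
          rw [hC2, if_neg (by omega), if_neg (by omega), if_pos rfl]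
        have hC2d : P₂.C (g + 4) = P.C (g + 1) := by
          rw [hC2, if_neg (by omega), if_neg (by omega), if_neg (by omega), if_pos rfl]
        have hC2e : ∀ j, g + 5 ≤ j → P₂.C j = P.C (j - 2) := by
          intro j hj
          rw [hC2, if_neg (by omega), if_neg (by omega), if_neg (by omega), if_neg (by omega)]
        have hV2a : ∀ j, j ≤ g → P₂.V j = P.V j := by
          intro j hj
          rw [hV2 j, if_pos hj]
        have hV2b : P₂.V (g + 1) = false := by
          rw [hV2, if_neg (by omega), if_pos rfl]
        have hV2c : P₂.V (g + 2) = false := by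
          rw [hV2, if_neg (by omega), if_neg (by omega), if_pos rfl]
        have hV2d : P₂.V (g + 3) = P.V (g + 2) := by
          rw [hV2, if_neg (by omega), if_neg (by omega), if_neg (by omega), if_pos rfl]
        have hV2e : P₂.V (g + 4) = P.R (g + 2) (P.C (g + 1)) := by
          rw [hV2, if_neg (by omega), if_neg (by omega), if_neg (by omega), if_neg (by omega),
            if_pos rfl]
        have hV2f : ∀ j, g + 5 ≤ j → P₂.V j = P.V (j - 2) := by
          intro j hj
          rw [hV2, if_neg (by omega), if_neg (by omega), if_neg (by omega), if_neg (by omega),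
            if_neg (by omega)]
        have hRpre : ∀ i, P.R (g + 1) i = P₂.R (g + 1) i :=
          R_congr P P₂ (fun i => rfl) (g + 1)
            (fun m hm1 hm2 => ⟨(hC2a m (by omega)).symm, (hV2a m (by omega)).symm⟩)
        have hRg1 : ∀ i, i ≠ P.C (g + 1) → P.R (g + 1) i = false := by
          intro i hi
          have h := hRu i
          rw [R_succ P (g + 1) (by omega) i, if_neg (fun hc => hi hc.symm)] at h
          rw [h]
          simp [hi]
        have hR2g2 : ∀ i, P₂.R (g + 2) i = false := by
          intro i
          rw [show g + 2 = (g + 1) + 1 from rfl, R_succ P₂ (g + 1) (by omega) i,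
            hC2a (g + 1) (by omega), hV2b]
          split_ifs with hci
          · rfl
          · rw [← hRpre i]
            exact hRg1 i (fun h => hci h.symm)
        have hR2g3 : ∀ i, P₂.R (g + 3) i = false := by
          intro i
          rw [show g + 3 = (g + 2) + 1 from rfl, R_succ P₂ (g + 2) (by omega) i, hC2b, hV2c]
          split_ifs
          · rfl
          · exact hR2g2 i
        have hR2g4 : ∀ i, P₂.R (g + 4) i = false := by
          intro i
          rw [show g + 4 = (g + 3) + 1 from rfl, R_succ P₂ (g + 3) (by omega) i, hC2c, hV2d, hVg2]
          split_ifs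
          · rfl
          · exact hR2g3 i
        have hR2g5 : ∀ i, P₂.R (g + 5) i = decide (i = P.C (g + 1)) := by
          intro i
          rw [show g + 5 = (g + 4) + 1 from rfl, R_succ P₂ (g + 4) (by omega) i, hC2d, hV2e, hRg2p]
          split_ifs with hci
          · subst hci
            simp
          · rw [hR2g4 i, eq_comm, decide_eq_false_iff_not]
            exact fun h => hci h.symm
        have hRg3old : ∀ i, P.R (g + 3) i = decide (i = P.C (g + 1)) := by
          intro i
          rw [show g + 3 = (g + 2) + 1 from rfl, R_succ P (g + 2) (by omega) i, hVg2]
          split_ifs with hci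
          · rw [← hci, eq_comm, decide_eq_false_iff_not]
            exact hcp
          · exact hRu i
        have hRshift : ∀ j, g + 3 ≤ j → ∀ i, P₂.R (j + 2) i = P.R j i := by
          intro j hj
          induction j, hj using Nat.le_induction with
          | base =>
            intro i
            rw [show g + 3 + 2 = g + 5 from rfl, hR2g5 i, hRg3old i]
          | succ j hj ih =>
            intro i
            show P₂.R ((j + 2) + 1) i = P.R (j + 1) i
            rw [R_succ P₂ (j + 2) (by omega) i, R_succ P j (by omega) i,
              hC2e (j + 2) (by omega), hV2f (j + 2) (by omega),
              show j + 2 - 2 = j from by omega, ih i]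
        have hT2 : trueSet P₂ (k + 2) = insert (g + 4) ((trueSet P k).erase (g + 1)) := by
          ext x
          simp only [trueSet, Finset.mem_filter, Finset.mem_Icc, Finset.mem_insert,
            Finset.mem_erase]
          constructor
          · rintro ⟨⟨hx1, hx2⟩, hVx⟩
            rcases lt_or_ge x (g + 1) with hlt | hge
            · right
              rw [hV2a x (by omega)] at hVx
              exact ⟨by omega, ⟨hx1, by omega⟩, hVx⟩
            · have hx5 : x = g + 1 ∨ x = g + 2 ∨ x = g + 3 ∨ x = g + 4 ∨ g + 5 ≤ x := by omega
              rcases hx5 with rfl | rfl | rfl | rfl | hx5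
              · rw [hV2b] at hVx
                exact absurd hVx (by simp)
              · rw [hV2c] at hVx
                exact absurd hVx (by simp)
              · rw [hV2d, hVg2] at hVx
                exact absurd hVx (by simp)
              · exact Or.inl rfl
              · exfalso
                rw [hV2f x hx5] at hVx
                have hxT : x - 2 ∈ trueSet P k := mem_trueSet.mpr ⟨⟨by omega, by omega⟩, hVx⟩
                have := hmax _ hxT
                omega
          · rintro (rfl | ⟨hxne, ⟨hx1, hx2⟩, hVx⟩)
            · refine ⟨⟨by omega, by omega⟩, ?_⟩
              rw [hV2e, hRg2p]
            · have hxg : x ≤ g := by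
                have := hmax x (mem_trueSet.mpr ⟨⟨hx1, hx2⟩, hVx⟩)
                omega
              refine ⟨⟨hx1, by omega⟩, ?_⟩
              rw [hV2a x hxg]
              exact hVx
        have hg4notmem : g + 4 ∉ (trueSet P k).erase (g + 1) := by
          intro hmem
          have := hmax _ (Finset.mem_of_mem_erase hmem)
          omega
        have hcard2 : (trueSet P₂ (k + 2)).card ≤ a + 1 := by
          rw [hT2, Finset.card_insert_of_notMem hg4notmem, Finset.card_erase_of_mem hum]
          omega
        have hsup2 : (trueSet P₂ (k + 2)).sup id = g + 4 := by
          rw [hT2]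
          apply le_antisymm
          · apply Finset.sup_le
            intro x hx
            rcases Finset.mem_insert.mp hx with rfl | hx
            · exact le_refl _
            · have := hmax _ (Finset.mem_of_mem_erase hx)
              simp only [id_eq]
              omega
          · exact Finset.le_sup (f := id) (Finset.mem_insert_self _ _)
        have hg2 : GoodPath P₂ (k + 2) := by
          refine ⟨fun i => hg.1 i, ?_⟩
          intro w hw1 hwk hVw
          have hw_cases : (w ≤ g ∧ P.V w = true) ∨ w = g + 4 := by
            have hwT : w ∈ trueSet P₂ (k + 2) := mem_trueSet.mpr ⟨⟨hw1, by omega⟩, hVw⟩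
            rw [hT2] at hwT
            rcases Finset.mem_insert.mp hwT with rfl | hwT
            · exact Or.inr rfl
            · left
              have h1 := Finset.mem_of_mem_erase hwT
              have hne := Finset.ne_of_mem_erase hwT
              have h2 := hmax _ h1
              rw [mem_trueSet] at h1
              exact ⟨by omega, h1.2⟩
          rcases hw_cases with ⟨hwg, hVw'⟩ | rfl
          · obtain ⟨vw, hw2, hwk', hCw, hintw, hconsw, hRw⟩ := hg.2 w hw1 (by omega) hVw'
            have hvwle : vw ≤ g + 1 := by
              by_contra hvw
              have h2 := (hintw (g + 1) (by omega) (by omega)).2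
              rw [hVu] at h2
              simp at h2
            refine ⟨vw, hw2, by omega, ?_, ?_, ?_, ?_⟩
            · rw [hC2a vw (by omega), hC2a w (by omega), hCw]
            · intro j hj1 hj2
              rw [hC2a j (by omega), hC2a w (by omega), hV2a j (by omega)]
              exact hintw j hj1 hj2
            · intro j hj1 hj2
              rw [hC2a j (by omega), hC2a (j + 1) (by omega)]
              exact hconsw j hj1 hj2
            · intro i
              rw [hC2a w (by omega), ← R_congr P P₂ (fun i => rfl) (w + 1)
                (fun m hm1 hm2 => ⟨(hC2a m (by omega)).symm, (hV2a m (by omega)).symm⟩) i]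
              exact hRw i
          · refine ⟨v + 2, by omega, by omega, ?_, ?_, ?_, ?_⟩
            · rw [hC2e (v + 2) (by omega), show v + 2 - 2 = v from by omega, hC2d, hCv]
            · intro j hj1 hj2
              rw [hC2e j (by omega), hC2d, hV2f j (by omega)]
              exact hint (j - 2) (by omega) (by omega)
            · intro j hj1 hj2
              rcases eq_or_lt_of_le hj1 with heq | hjgt
              · rw [← heq, hC2d, hC2e (g + 4 + 1) (by omega),
                  show g + 4 + 1 - 2 = g + 3 from by omega]
                exact fun h => hb'p h.symm
              · rw [hC2e j (by omega), hC2e (j + 1) (by omega),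
                  show j + 1 - 2 = (j - 2) + 1 from by omega]
                exact hcons (j - 2) (by omega) (by omega)
            · intro i
              rw [hC2d]
              exact hR2g5 i
        have hred2 : P₂.Reducible (k + 2) := by
          apply ihb P₂ (k + 2) hg2 hcard2
          rw [hsup2]
          omega
        obtain ⟨P', k', hst, hz⟩ := hred2
        refine ⟨P', k', ?_, hz⟩
        refine Reduces.estep P k (g + 2) 4 2 (fun _ => false)
          (Q4 (P.C (g + 1)) (P.C (g + 3))) P' k'
          (by omega) (by omega) ?_ ?_ ?_ ?_ ?_
        · exact isCubePath_Q4 _ _ _ (Ne.symm hcp) (Ne.symm hcb') (Ne.symm hb'p)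
        · rfl
        · rfl
        · exact exhEdge_zero P (g + 2) 4 2 _ e hec hre
        · exact hst

end SPath
/-- every admissible path of dimension `n ≥ 3` with `max_j h_j(P) = 1`
is reducible: a finite sequence of exhaustive vertex and edge expansions transforms it
into a `0`-path. -/
theorem low_admissible_reducible (n k : ℕ) (hn : 3 ≤ n) (P : SPath n)
    (hP : P.Admissible k)
    (hle : ∀ j, 1 ≤ j → j ≤ k → P.height j ≤ 1)
    (hone : ∃ j, 1 ≤ j ∧ j ≤ k ∧ P.height j = 1) :
    P.Reducible k := by
  classical
  obtain ⟨r, a, hr, ha0, har, hmono, hatom⟩ := hP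
  have hamono : ∀ d s : ℕ, s + d ≤ r → a s ≤ a (s + d) := by
    intro d
    induction d with
    | zero => intro s _; exact le_refl _
    | succ d ih =>
      intro s hsr
      have h1 : a (s + d) < a (s + d + 1) := hmono (s + d) (by omega)
      have h2 := ih s (by omega)
      rw [show s + (d + 1) = s + d + 1 from by omega]
      omega
  have hblock0 : ∀ s, s < r → ∀ i, P.R (a s + 1) i = false := by
    intro s hs i
    have h := (hatom s hs).2.2.2.1 i
    rwa [SPath.R_sub P (a s) 1 (le_refl 1) i] at h
  have hblockEnd : ∀ s, s < r → ∀ i, P.R (a (s + 1)) i = false := by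
    intro s hs i
    have hlt := hmono s hs
    have h := (hatom s hs).2.2.2.2.1 i
    rw [SPath.R_sub P (a s) (a (s + 1) - a s) (by omega) i] at h
    rwa [show a s + (a (s + 1) - a s) = a (s + 1) from by omega] at h
  have hI0 : ∀ i, P.I i = false := by
    intro i
    have h := hblock0 0 (by omega) i
    rw [ha0] at h
    rwa [show (0 : ℕ) + 1 = 1 from rfl, SPath.R_one] at h
  refine SPath.reducible_of_good hn ((SPath.trueSet P k).card) k P k ⟨hI0, ?_⟩ le_rfl
    (Nat.le_add_left k _)
  intro u hu1 huk hVu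
  have hex : ∃ s, u ≤ a (s + 1) ∧ s < r := by
    refine ⟨r - 1, ?_, by omega⟩
    rw [show r - 1 + 1 = r from by omega, har]
    omega
  have hsspec := Nat.find_spec hex
  set s := Nat.find hex with hs_def
  have hsr : s < r := hsspec.2
  have hlow : a s < u := by
    rcases Nat.eq_zero_or_pos s with hs0 | hs0
    · rw [hs0, ha0]; omega
    · have hmin : ¬ (u ≤ a (s - 1 + 1) ∧ s - 1 < r) := Nat.find_min hex (by omega)
      rw [show s - 1 + 1 = s from by omega] at hmin
      by_contra hcon
      push_neg at hcon
      exact hmin ⟨hcon, by omega⟩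
  have hup : u < a (s + 1) := by
    rcases eq_or_lt_of_le hsspec.1 with heq | hlt
    · exfalso
      by_cases hs1 : s + 1 < r
      · have h := hblock0 (s + 1) hs1 (P.C u)
        rw [← heq] at h
        rw [SPath.V_eq P u hu1] at h
        rw [hVu] at h
        simp at h
      · have hsr1 : s + 1 = r := by omega
        rw [hsr1, har] at heq
        omega
    · exact hlt
  have hUk : a (s + 1) ≤ k := by
    have h := hamono (r - (s + 1)) (s + 1) (by omega)
    rw [show s + 1 + (r - (s + 1)) = r from by omega, har] at h
    omega
  have hnbf : ∀ j, a s + 1 ≤ j → j + 1 ≤ a (s + 1) - 1 → P.C j ≠ P.C (j + 1) := by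
    intro j hj1 hj2
    have h := (hatom s hsr).1 (j - a s) (by omega) (by omega)
    have e1 : (P.sub (a s + 1)).C (j - a s) = P.C j := by
      show P.C (a s + 1 - 1 + (j - a s)) = P.C j
      congr 1
      omega
    have e2 : (P.sub (a s + 1)).C (j - a s + 1) = P.C (j + 1) := by
      show P.C (a s + 1 - 1 + (j - a s + 1)) = P.C (j + 1)
      congr 1
      omega
    rw [e1, e2] at h
    exact h
  have hRind : ∀ i, P.R (u + 1) i = decide (i = P.C u) := by
    apply SPath.indicator_of_card_le
    · rw [SPath.V_eq P u hu1]
      exact hVu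
    · have hh := hle (u + 1) (by omega) (by omega)
      unfold SPath.height at hh
      exact hh
  have hvex : ∃ d, P.C (u + 1 + d) = P.C u ∧ u + 1 + d ≤ a (s + 1) - 1 := by
    by_contra hno
    push_neg at hno
    have hstab : P.R (a (s + 1)) (P.C u) = P.R (u + 1) (P.C u) := by
      apply SPath.R_stable P (P.C u) (u + 1) (by omega) (a (s + 1)) (by omega)
      intro j hj1 hj2 hCj
      have h := hno (j - (u + 1))
      rw [show u + 1 + (j - (u + 1)) = j from by omega] at h
      have := h hCj
      omega
    rw [SPath.V_eq P u hu1, hVu] at hstab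
    rw [hblockEnd s hsr (P.C u)] at hstab
    simp at hstab
  have hd0 := Nat.find_spec hvex
  set v := u + 1 + Nat.find hvex with hv_def
  have hCveq : P.C v = P.C u := hd0.1
  have hvUB : v ≤ a (s + 1) - 1 := hd0.2
  have hvmin : ∀ j, u < j → j < v → P.C j ≠ P.C u := by
    intro j hj1 hj2 hCj
    have hmin : ¬ (P.C (u + 1 + (j - (u + 1))) = P.C u ∧ u + 1 + (j - (u + 1)) ≤ a (s + 1) - 1) :=
      Nat.find_min hvex (by omega)
    rw [show u + 1 + (j - (u + 1)) = j from by omega] at hmin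
    exact hmin ⟨hCj, by omega⟩
  have hRconst : ∀ j, u + 1 ≤ j → j ≤ v → P.R j (P.C u) = true := by
    intro j hj1 hj2
    rw [SPath.R_stable P (P.C u) (u + 1) (by omega) j (by omega)
      (fun m hm1 hm2 => hvmin m (by omega) (by omega))]
    rw [SPath.V_eq P u hu1]
    exact hVu
  have hvk : v + 1 ≤ k := by omega
  have hvge : u + 2 ≤ v := by
    have hv1 : u + 1 ≤ v := by omega
    by_contra hcon
    have hveq : v = u + 1 := by omega
    have h := hnbf u (by omega) (by omega)
    apply h
    rw [← hveq]
    exact hCveq.symm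
  have hintV : ∀ j, u < j → j < v → P.V j = false := by
    intro j hj1 hj2
    have h2 : ∀ i, P.R (j + 1) i = decide (i = P.C u) := by
      apply SPath.indicator_of_card_le
      · exact hRconst (j + 1) (by omega) (by omega)
      · have hh := hle (j + 1) (by omega) (by omega)
        unfold SPath.height at hh
        exact hh
    rw [← SPath.V_eq P j (by omega), h2 (P.C j)]
    simp [hvmin j hj1 hj2]
  exact ⟨v, hvge, hvk, hCveq, fun j hj1 hj2 => ⟨hvmin j hj1 hj2, hintV j hj1 hj2⟩,
    fun j hj1 hj2 => hnbf j (by omega) (by omega), hRind⟩
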